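/- The conditional empirical entropy is not a length function: if |A| ≥ 2, then for all integers n > k ≥ 0, Σ_{y ∈ Aⁿ} 2^{−n·H_k(y)} ≥ 2, so Kraft's inequality fails for the codeword-length assignment y ↦ n·H_k(y). -/

import Mathlib

/-- The `(k+1)`-th order empirical count `m_{a,b}(y)`: the fraction of positions
`i` of `y` (indices extended cyclically) whose preceding `k`-context is `b` and
whose symbol is `a`. -/
noncomputable def empCount {A : Type*} [Fintype A] [DecidableEq A] (n k : ℕ)
    (y : Fin n → A) (a : A) (b : Fin k → A) : ℝ :=
  ((Finset.univ.filter fun i : Fin n =>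
      y i = a ∧ ∀ j : Fin k,
        y ⟨(i.val + (n - (k - j.val) % n)) % n, Nat.mod_lt _ i.pos⟩ = b j).card : ℝ) / n

/-- The conditional empirical entropy `H_k(y)` of order `k` (base-2 logarithms,
with the convention `0·log 0 = 0`): the conditional Shannon entropy
`H(Y_{k+1} | Y_1,…,Y_k)` of a random vector distributed according to the
empirical counts of `y`. -/
noncomputable def condEmpEntropy {A : Type*} [Fintype A] [DecidableEq A]
    (n k : ℕ) (y : Fin n → A) : ℝ :=
  -∑ b : Fin k → A, ∑ a : A,
      empCount n k y a b *
        Real.logb 2 (empCount n k y a b / ∑ a' : A, empCount n k y a' b)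

/-! A constant word has only one context, always followed by the same symbol, so its
conditional empirical entropy vanishes. The `|A| ≥ 2` constant words therefore already
contribute `2⁰ = 1` each to the Kraft sum. -/

open Finset

section ConstantWord

variable {A : Type*} [Fintype A] [DecidableEq A] {n : ℕ} (k : ℕ)

lemma empCount_const (hn : 0 < n) (a a' : A) (b : Fin k → A) :
    empCount n k (Function.const (Fin n) a) a' b =
      if a' = a ∧ b = Function.const (Fin k) a then 1 else 0 := by
  by_cases h : a' = a ∧ b = Function.const (Fin k) a
  · obtain ⟨rfl, rfl⟩ := h
    simp [empCount, hn.ne']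
  · rw [if_neg h, empCount, div_eq_zero_iff, Nat.cast_eq_zero, card_eq_zero,
      filter_eq_empty_iff]
    exact Or.inl fun i _ hi => h ⟨hi.1.symm, funext fun j => (hi.2 j).symm⟩

lemma condEmpEntropy_const (hn : 0 < n) (a : A) :
    condEmpEntropy n k (Function.const (Fin n) a) = 0 := by
  refine neg_eq_zero.mpr <| sum_eq_zero fun b _ => sum_eq_zero fun a' _ => ?_
  simp only [empCount_const k hn]
  by_cases h : a' = a ∧ b = Function.const (Fin k) a
  · obtain ⟨rfl, rfl⟩ := h
    simp
  · simp [h]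

end ConstantWord

/-- The conditional empirical entropy is not a length function: Kraft's
inequality fails for the codeword-length assignment `y ↦ n·H_k(y)`, since
`Σ_{y∈Aⁿ} 2^{−n·H_k(y)} ≥ 2` whenever `|A| ≥ 2`. -/
theorem kraft_fails_for_condEmpEntropy {A : Type*} [Fintype A] [DecidableEq A]
    (hA : 2 ≤ Fintype.card A) (n k : ℕ) (hk : k < n) :
    (2 : ℝ) ≤ ∑ y : Fin n → A, (2 : ℝ) ^ (-(n : ℝ) * condEmpEntropy n k y) := by
  have hn : 0 < n := by omega
  have : NeZero n := ⟨hn.ne'⟩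
  let constWord : A ↪ (Fin n → A) := ⟨Function.const (Fin n), Function.const_injective⟩
  calc (2 : ℝ) ≤ Fintype.card A := by exact_mod_cast hA
    _ = ∑ y ∈ univ.map constWord, (2 : ℝ) ^ (-(n : ℝ) * condEmpEntropy n k y) := by
        simp [constWord, condEmpEntropy_const k hn]
    _ ≤ _ := sum_le_univ_sum_of_nonneg fun y => by positivity
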